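/- Let M be a loopless matroid with ground set E, and let e ∈ E. Then ∑_{F flat, e ∈ F ⊊ E} χ̄_{M/F}(q) = [rk M − 1]_q. -/

import Mathlib

open Polynomial

namespace MatroidZeta

open scoped Classical

variable {α : Type*}

/-- The `q`-analogue `[n]_q = 1 + q + ⋯ + q^(n-1)` of a natural number `n`, in `ℤ[q]`. -/
noncomputable def qAnalogue (n : ℕ) : Polynomial ℤ := ∑ i ∈ Finset.range n, X ^ i

/-- The rank of a set `X` in a matroid `M`: the largest size of an independent subset of `X`. -/
noncomputable def rk (M : Matroid α) (X : Set α) : ℕ :=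
  sSup {n | ∃ I, M.Indep I ∧ I ⊆ X ∧ I.ncard = n}

/-- Contraction `M / C` of a matroid, defined as the dual of the deletion of `C`
from the dual matroid. -/
noncomputable def contract (M : Matroid α) (C : Set α) : Matroid α :=
  ((M✶.restrict (M✶.E \ C))✶)

/-- A matroid is loopless if no element of the ground set lies in the closure of `∅`. -/
def Loopless (M : Matroid α) : Prop := M.closure ∅ = ∅

/-- The characteristic polynomial `χ_M(q) = ∑_{S ⊆ E} (-1)^{#S} q^(rk M - rk S)`. -/
noncomputable def charPoly (M : Matroid α) : Polynomial ℤ :=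
  ∑ᶠ S ∈ {S : Set α | S ⊆ M.E}, (-1 : ℤ) ^ S.ncard • (X : Polynomial ℤ) ^ (rk M M.E - rk M S)

/-- The reduced characteristic polynomial
`χ̄_M(q) = χ_M(q)/(q-1) = ∑_{S ⊆ E} (-1)^{#S} [rk M - rk S]_q`. -/
noncomputable def redCharPoly (M : Matroid α) : Polynomial ℤ :=
  ∑ᶠ S ∈ {S : Set α | S ⊆ M.E}, (-1 : ℤ) ^ S.ncard • qAnalogue (rk M M.E - rk M S)

/-- `wt_M(w) = max_{B basis of M} ∑_{e ∈ B} w e`. -/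
noncomputable def wt (M : Matroid α) (w : α → ℝ) : ℝ :=
  sSup {x | ∃ B, M.IsBase B ∧ x = ∑ᶠ e ∈ B, w e}

/-- The initial matroid `M_w`: the matroid on the ground set of `M` whose bases are the
bases of `M` of maximal `w`-weight.  (Such a matroid exists and is unique.) -/
noncomputable def initialMatroid (M : Matroid α) (w : α → ℝ) : Matroid α :=
  if h : ∃ N : Matroid α, N.E = M.E ∧
      ∀ B, N.IsBase B ↔ M.IsBase B ∧ ∑ᶠ e ∈ B, w e = wt M w
  then h.choose else M

/-- A flag of non-minimal flats of `M`: a chain of flats strictly above `cl(∅)`. -/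
def IsFlag (M : Matroid α) (C : Finset (Set α)) : Prop :=
  (∀ F ∈ C, M.IsFlat F ∧ M.closure ∅ ⊂ F) ∧ IsChain (· ⊆ ·) (C : Set (Set α))

/-- `N(M)`: the set of flags of non-minimal flats of `M`. -/
def flags (M : Matroid α) : Set (Finset (Set α)) := {C | IsFlag M C}

/-- `N°(M)`: flags not containing the ground set. -/
def flagsCirc (M : Matroid α) : Set (Finset (Set α)) := {C | IsFlag M C ∧ M.E ∉ C}

/-- `N*(M)`: flags containing the ground set. -/
def flagsStar (M : Matroid α) : Set (Finset (Set α)) := {C | IsFlag M C ∧ M.E ∈ C}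

/-- `z_C(F)`: the largest member of the chain `C` strictly below `F` (or `∅` if none). -/
def zmin (C : Finset (Set α)) (F : Set α) : Set α := ⋃₀ {G | G ∈ C ∧ G ⊂ F}

/-- The weight vector `∑_{F ∈ C} v_F`, a point in the relative interior of the cone `σ_C`. -/
noncomputable def flagWeight (C : Finset (Set α)) : α → ℝ :=
  fun e => ∑ F ∈ C, if e ∈ F then (1 : ℝ) else 0

/-- The initial matroid `M_C` of a flag `C`. -/
noncomputable def flagMatroid (M : Matroid α) (C : Finset (Set α)) : Matroid α :=
  initialMatroid M (flagWeight C)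

/-!
Via the rank formula for contractions,
`χ̄_{M/T}(q) = ∑_{S ⊆ E ∖ T} (-1)^{|S|} [rk E - rk (T ∪ S)]_q`.
Summed over *all* `T ∋ e` and regrouped by `U = T ∪ S`, this becomes
`∑_{U ∋ e} [rk E - rk U]_q ∑_{S ⊆ U ∖ {e}} (-1)^{|S|} = [rk E - rk {e}]_q`,
and `rk {e} = 1` as `M` is loopless. The summands with `T` not a proper flat vanish: if `T` is
not a flat, adding a point of `cl T ∖ T` to `S` does not change the rank, so the terms cancel in
pairs; and `T = E` contributes `[0]_q = 0`.
-/

open scoped Matroid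

section AlternatingSums

lemma finsum_mem_setOf_eq_sum_filter_powerset {β : Type*} [AddCommMonoid β] (E : Finset α)
    {p : Set α → Prop} (hp : ∀ S, p S → S ⊆ E) (f : Set α → β) :
    ∑ᶠ S ∈ {S | p S}, f S = ∑ T ∈ E.powerset.filter (fun T : Finset α => p T), f T := by
  have hsets : {S | p S} =
      (↑) '' (↑(E.powerset.filter fun T : Finset α => p T) : Set (Finset α)) := by
    ext S
    refine ⟨fun hS => ?_, ?_⟩
    · obtain ⟨T, rfl⟩ := (E.finite_toSet.subset (hp S hS)).exists_finset_coe
      exact ⟨T, by simpa using ⟨Finset.coe_subset.mp (hp _ hS), hS⟩, rfl⟩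
    · rintro ⟨T, hT, rfl⟩
      exact (Finset.mem_filter.mp hT).2
  rw [hsets, finsum_mem_image Finset.coe_injective.injOn, finsum_mem_coe_finset]

variable {G : Type*} [AddCommGroup G]

lemma sum_powerset_neg_one_pow_smul_eq_zero (E : Finset α) {x : α} (hx : x ∈ E)
    {g : Finset α → G} (hg : ∀ S, g (insert x S) = g S) :
    ∑ S ∈ E.powerset, (-1 : ℤ) ^ S.card • g S = 0 := by
  rw [← Finset.insert_erase hx, Finset.sum_powerset_insert (Finset.notMem_erase x E),
    ← Finset.sum_add_distrib]
  refine Finset.sum_eq_zero fun S hS => ?_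
  have hxS : x ∉ S := fun h => Finset.notMem_erase x E (Finset.mem_powerset.mp hS h)
  rw [Finset.card_insert_of_notMem hxS, hg, pow_succ]
  simp

lemma sum_filter_mem_sum_powerset_sdiff (E : Finset α) {e : α} (he : e ∈ E)
    (g : Finset α → G) :
    ∑ T ∈ E.powerset with e ∈ T, ∑ S ∈ (E \ T).powerset, (-1 : ℤ) ^ S.card • g (T ∪ S)
      = g {e} := by
  calc _ = ∑ U ∈ E.powerset with e ∈ U,
        ∑ S ∈ (U.erase e).powerset, (-1 : ℤ) ^ S.card • g U := by
        rw [Finset.sum_sigma', Finset.sum_sigma']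
        refine Finset.sum_bij' (fun p _ => ⟨p.1 ∪ p.2, p.2⟩) (fun p _ => ⟨p.1 \ p.2, p.2⟩)
          ?_ ?_ ?_ ?_ (fun _ _ => rfl)
        all_goals
          rintro ⟨T, S⟩ h
          simp only [Finset.mem_sigma, Finset.mem_filter, Finset.mem_powerset, Sigma.mk.injEq,
            heq_eq_eq] at h ⊢
          grind
    _ = ∑ U ∈ E.powerset with e ∈ U, (if U.erase e = ∅ then g U else 0) := by
        simp_rw [← Finset.sum_smul, Finset.sum_powerset_neg_one_pow_card, ite_smul, one_smul,
          zero_smul]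
    _ = g {e} := by
        rw [Finset.sum_eq_single {e}]
        · simp
        · intro U hU hne
          have heU : e ∈ U := (Finset.mem_filter.mp hU).2
          rw [if_neg]
          simp [Finset.erase_eq_empty_iff, hne, Finset.ne_empty_of_mem heU]
        · simp_all

end AlternatingSums

section Rank

lemma rk_eq_ncard_of_isBasis' {M : Matroid α} [M.RankFinite] {I X : Set α}
    (hI : M.IsBasis' I X) : rk M X = I.ncard := by
  refine IsGreatest.csSup_eq ⟨⟨I, hI.indep, hI.subset, rfl⟩, ?_⟩
  rintro _ ⟨J, hJ, hJX, rfl⟩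
  rw [← Nat.cast_le (α := ℕ∞), hJ.finite.cast_ncard_eq, hI.indep.finite.cast_ncard_eq,
    hI.encard_eq_eRk]
  exact hJ.encard_le_eRk_of_subset hJX

lemma cast_rk (M : Matroid α) [M.RankFinite] (X : Set α) : (rk M X : ℕ∞) = M.eRk X := by
  obtain ⟨I, hI⟩ := M.exists_isBasis' X
  rw [rk_eq_ncard_of_isBasis' hI, hI.indep.finite.cast_ncard_eq, hI.encard_eq_eRk]

lemma eRk_contract_add_eRk (M : Matroid α) (C X : Set α) :
    (M ／ C).eRk X + M.eRk C = M.eRk (X ∪ C) := by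
  obtain ⟨J, hJ⟩ := M.exists_isBasis' C
  obtain ⟨K, hK, hJK⟩ := hJ.indep.subset_isBasis'_of_subset
    (hJ.subset.trans Set.subset_union_right : J ⊆ X ∪ C)
  have hKC : (M ／ C).IsBasis' (K \ C) ((X ∪ C) \ C) :=
    hK.contract_isBasis' hJ (hK.indep.subset (Set.union_subset Set.sdiff_subset hJK))
  have hKJ : K ∩ C = J := (hJ.eq_of_subset_indep (hK.indep.subset Set.inter_subset_left)
    (Set.subset_inter hJK hJ.subset) Set.inter_subset_right).symm
  have hX : (M ／ C).eRk ((X ∪ C) \ C) = (M ／ C).eRk X := by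
    rw [← Matroid.eRk_inter_ground, eq_comm, ← Matroid.eRk_inter_ground, Matroid.contract_ground]
    congr 1
    tauto_set
  rw [← hX, ← hKC.encard_eq_eRk, ← hJ.encard_eq_eRk, ← hK.encard_eq_eRk, ← hKJ,
    Set.encard_sdiff_add_encard_inter]

lemma contract_eq_contract (M : Matroid α) (C : Set α) : contract M C = M ／ C := rfl

lemma rk_contract_add_rk (M : Matroid α) [M.RankFinite] (C X : Set α) :
    rk (contract M C) X + rk M C = rk M (X ∪ C) := by
  rw [← Nat.cast_inj (R := ℕ∞), Nat.cast_add, contract_eq_contract, cast_rk, cast_rk, cast_rk,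
    eRk_contract_add_eRk]

lemma rk_insert_of_mem_closure {M : Matroid α} [M.RankFinite] {x : α} {X : Set α}
    (hx : x ∈ M.closure X) : rk M (insert x X) = rk M X := by
  rw [← Nat.cast_inj (R := ℕ∞), cast_rk, cast_rk, ← Matroid.eRk_closure_eq,
    Matroid.closure_insert_eq_of_mem_closure hx, Matroid.eRk_closure_eq]

lemma rk_singleton_of_loopless {M : Matroid α} [M.RankFinite] (hM : Loopless M) {e : α}
    (he : e ∈ M.E) : rk M {e} = 1 := by
  have : M.Loopless := ⟨hM⟩
  rw [← Nat.cast_inj (R := ℕ∞), cast_rk, Matroid.eRk_singleton_eq he, Nat.cast_one]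

end Rank

section ReducedCharacteristicPolynomial

lemma redCharPoly_eq_sum_powerset (N : Matroid α) (E : Finset α) (hE : N.E = E) :
    redCharPoly N = ∑ S ∈ E.powerset, (-1 : ℤ) ^ S.card • qAnalogue (rk N N.E - rk N S) := by
  rw [redCharPoly, finsum_mem_setOf_eq_sum_filter_powerset E fun S hS => hE ▸ hS,
    Finset.filter_true_of_mem fun S hS => hE ▸ Finset.coe_subset.mpr (Finset.mem_powerset.mp hS)]
  simp_rw [Set.ncard_coe_finset]

lemma redCharPoly_eq_zero_of_ground_eq_empty (N : Matroid α) (h : N.E = ∅) :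
    redCharPoly N = 0 := by
  simp [redCharPoly_eq_sum_powerset N ∅ (by simpa using h), qAnalogue, h]

variable {M : Matroid α} [M.RankFinite]

lemma redCharPoly_contract_eq_sum (E : Finset α) (hE : M.E = E) {T : Finset α} (hT : T ⊆ E) :
    redCharPoly (contract M T) =
      ∑ S ∈ (E \ T).powerset, (-1 : ℤ) ^ S.card • qAnalogue (rk M M.E - rk M ↑(T ∪ S)) := by
  have hground : (contract M T).E = M.E \ T := Matroid.contract_ground M T
  rw [redCharPoly_eq_sum_powerset _ (E \ T) (by rw [hground, hE, Finset.coe_sdiff])]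
  refine Finset.sum_congr rfl fun S _ => ?_
  have hrkE := rk_contract_add_rk M T (M.E \ T)
  have hrkS := rk_contract_add_rk M T S
  rw [Set.sdiff_union_of_subset (hE ▸ Finset.coe_subset.mpr hT)] at hrkE
  rw [hground, Finset.coe_union, Set.union_comm]
  congr 2
  omega

lemma redCharPoly_contract_eq_zero_of_not_isFlat (E : Finset α) (hE : M.E = E) {T : Finset α}
    (hT : T ⊆ E) (hTF : ¬ M.IsFlat T) : redCharPoly (contract M T) = 0 := by
  have hTE : (T : Set α) ⊆ M.E := hE ▸ Finset.coe_subset.mpr hT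
  obtain ⟨x, hxT, hx⟩ := Set.exists_of_ssubset ((M.subset_closure T hTE).ssubset_of_ne
    fun h => hTF (Matroid.isFlat_iff_closure_eq.mpr h.symm))
  have hxE : x ∈ E \ T := by
    rw [← Finset.mem_coe, Finset.coe_sdiff, ← hE]
    exact ⟨M.closure_subset_ground T hxT, hx⟩
  rw [redCharPoly_contract_eq_sum E hE hT]
  refine sum_powerset_neg_one_pow_smul_eq_zero (E \ T) hxE fun S => ?_
  rw [Finset.union_insert, Finset.coe_insert, rk_insert_of_mem_closure
    (M.closure_subset_closure (by simp) hxT)]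

lemma sum_filter_mem_redCharPoly_contract (E : Finset α) (hE : M.E = E) {e : α} (he : e ∈ E) :
    ∑ T ∈ E.powerset with e ∈ T, redCharPoly (contract M T)
      = qAnalogue (rk M M.E - rk M {e}) := by
  rw [Finset.sum_congr rfl fun T hT =>
    redCharPoly_contract_eq_sum E hE (Finset.mem_powerset.mp (Finset.mem_filter.mp hT).1)]
  exact (sum_filter_mem_sum_powerset_sdiff E he fun U => qAnalogue (rk M M.E - rk M U)).trans
    (by rw [Finset.coe_singleton])

end ReducedCharacteristicPolynomial

theorem sum_redCharPoly_contract_mem (M : Matroid α) (hE : M.E.Finite)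
    (hM : Loopless M) {e : α} (he : e ∈ M.E) :
    ∑ᶠ F ∈ {F : Set α | M.IsFlat F ∧ e ∈ F ∧ F ⊂ M.E}, redCharPoly (contract M F)
      = qAnalogue (rk M M.E - 1) := by
  have : M.Finite := ⟨hE⟩
  obtain ⟨E, hME⟩ := hE.exists_finset_coe
  rw [finsum_mem_setOf_eq_sum_filter_powerset E fun F hF => hME ▸ hF.2.2.subset,
    ← rk_singleton_of_loopless hM he,
    ← sum_filter_mem_redCharPoly_contract E hME.symm (by rwa [← Finset.mem_coe, hME])]
  refine Finset.sum_subset (fun T hT => ?_) fun T hT hTF => ?_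
  · simp only [Finset.mem_filter] at hT ⊢
    exact ⟨hT.1, hT.2.2.1⟩
  simp only [Finset.mem_filter, not_and] at hT hTF
  by_cases hflat : M.IsFlat T
  · have hTE : (T : Set α) = M.E := by_contra fun hne =>
      hTF hT.1 hflat hT.2 (hflat.subset_ground.ssubset_of_ne hne)
    rw [hTE]
    exact redCharPoly_eq_zero_of_ground_eq_empty _
      (by rw [contract_eq_contract, Matroid.contract_ground, Set.sdiff_self])
  · exact redCharPoly_contract_eq_zero_of_not_isFlat E hME.symm (Finset.mem_powerset.mp hT.1) hflat

end MatroidZeta
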